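/- Let x_i, x_j, x_k, x_l ∈ ℝ³ be such that the pairs (x_i − x_j, x_i − x_k) and (x_j − x_i, x_j − x_l) are each linearly independent. Define the frame F_i = (e^i_1, e^i_2, e^i_3) by Gram–Schmidt orthonormalization of (x_i − x_j, x_i − x_k) followed by e^i_3 = e^i_1 × e^i_2, and define F_j analogously from (x_j − x_i, x_j − x_l). Then the (3,3) entry of the frame-transition matrix between F_i and F_j satisfies ⟨e^i_3, e^j_3⟩ = ⟨(x_i − x_j) × (x_i − x_k), (x_j − x_i) × (x_j − x_l)⟩ / (‖(x_i − x_j) × (x_i − x_k)‖ · ‖(x_j − x_i) × (x_j − x_l)‖), i.e. it equals the inner product of the unit normals of the planes through (x_k, x_i, x_j) and (x_l, x_j, x_i) — the cosine of the torsion (dihedral) angle τ_{ij}. -/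

import Mathlib

/-! The Gram–Schmidt frame built from `(u, v)` has third vector `e₁ × e₂ = n / ‖n‖` with
`n = u × v`: replacing `v` by its component `w` orthogonal to `u` does not change `u × w`, and
since `u ⊥ w` the Lagrange identity gives `‖u × w‖ = ‖u‖ ‖w‖`, which is exactly the product of
the two normalising factors. The entry `⟨e^i_3, e^j_3⟩` is then the inner product of two unit
normals. -/

noncomputable section

open scoped RealInnerProductSpace

/-- 3-dimensional Euclidean space. -/
abbrev E3 : Type := EuclideanSpace ℝ (Fin 3)

/-- The cross product on `E3`. -/
def cross3 (v w : E3) : E3 :=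
  (WithLp.equiv 2 (Fin 3 → ℝ)).symm
    ![v 1 * w 2 - v 2 * w 1, v 2 * w 0 - v 0 * w 2, v 0 * w 1 - v 1 * w 0]

/-- A linear isometry of `E3` is a rotation if its determinant is `1`. -/
def IsRotation (R : E3 ≃ₗᵢ[ℝ] E3) : Prop :=
  LinearMap.det (R.toLinearEquiv : E3 →ₗ[ℝ] E3) = 1

section InnerProductSpace

variable {F : Type*} [NormedAddCommGroup F] [InnerProductSpace ℝ F]

lemma real_inner_sub_inner_smul_self_of_norm_eq_one {e : F} (he : ‖e‖ = 1) (v : F) :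
    ⟪e, v - ⟪v, e⟫ • e⟫ = 0 := by
  rw [inner_sub_right, real_inner_smul_right, real_inner_self_eq_norm_sq, he, real_inner_comm]
  ring

lemma inv_norm_smul_smul_of_pos {c : ℝ} (hc : 0 < c) (x : F) :
    ‖c • x‖⁻¹ • (c • x) = ‖x‖⁻¹ • x := by
  rw [norm_smul_of_nonneg hc.le, smul_smul, mul_inv, mul_right_comm, inv_mul_cancel₀ hc.ne',
    one_mul]

lemma real_inner_inv_norm_smul_inv_norm_smul (x y : F) :
    ⟪‖x‖⁻¹ • x, ‖y‖⁻¹ • y⟫ = ⟪x, y⟫ / (‖x‖ * ‖y‖) := by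
  rw [real_inner_smul_left, real_inner_smul_right, div_eq_mul_inv, mul_inv]
  ring

end InnerProductSpace

lemma inner_E3_eq (x y : E3) : ⟪x, y⟫ = x 0 * y 0 + x 1 * y 1 + x 2 * y 2 := by
  simp only [PiLp.inner_apply, Fin.sum_univ_three, RCLike.inner_apply, conj_trivial]
  ring

lemma cross3_smul_left (a : ℝ) (u v : E3) : cross3 (a • u) v = a • cross3 u v := by
  ext i; fin_cases i <;> simp [cross3] <;> ring

lemma cross3_smul_right (a : ℝ) (u v : E3) : cross3 u (a • v) = a • cross3 u v := by
  ext i; fin_cases i <;> simp [cross3] <;> ring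

lemma cross3_sub_smul_self_right (u v : E3) (c : ℝ) : cross3 u (v - c • u) = cross3 u v := by
  ext i; fin_cases i <;> simp [cross3] <;> ring

lemma cross3_zero_left (v : E3) : cross3 0 v = 0 := by
  simpa using cross3_smul_left 0 0 v

lemma norm_cross3_sq (u v : E3) : ‖cross3 u v‖ ^ 2 = ‖u‖ ^ 2 * ‖v‖ ^ 2 - ⟪u, v⟫ ^ 2 := by
  simp only [← real_inner_self_eq_norm_sq, inner_E3_eq, cross3, WithLp.equiv_symm_apply,
    Matrix.cons_val_zero, Matrix.cons_val_one, Matrix.cons_val]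
  ring

lemma norm_cross3_of_inner_eq_zero {u v : E3} (h : ⟪u, v⟫ = 0) :
    ‖cross3 u v‖ = ‖u‖ * ‖v‖ := by
  have hsq : ‖cross3 u v‖ ^ 2 = (‖u‖ * ‖v‖) ^ 2 := by rw [norm_cross3_sq, h]; ring
  exact (pow_left_inj₀ (norm_nonneg _) (by positivity) two_ne_zero).mp hsq

lemma cross3_inv_norm_smul_of_inner_eq_zero {e w : E3} (he : ‖e‖ = 1) (h : ⟪e, w⟫ = 0) :
    cross3 e (‖w‖⁻¹ • w) = ‖cross3 e w‖⁻¹ • cross3 e w := by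
  rw [cross3_smul_right, norm_cross3_of_inner_eq_zero h, he, one_mul]

lemma cross3_gramSchmidt (u v : E3) :
    cross3 (‖u‖⁻¹ • u)
      (‖v - ⟪v, ‖u‖⁻¹ • u⟫ • (‖u‖⁻¹ • u)‖⁻¹ • (v - ⟪v, ‖u‖⁻¹ • u⟫ • (‖u‖⁻¹ • u)))
      = ‖cross3 u v‖⁻¹ • cross3 u v := by
  rcases eq_or_ne u 0 with rfl | hu
  · simp [cross3_zero_left]
  set e := ‖u‖⁻¹ • u with he_def
  have he : ‖e‖ = 1 := norm_smul_inv_norm hu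
  have hcross : cross3 e (v - ⟪v, e⟫ • e) = ‖u‖⁻¹ • cross3 u v := by
    rw [cross3_sub_smul_self_right, he_def, cross3_smul_left]
  have horth : ⟪e, v - ⟪v, e⟫ • e⟫ = 0 := real_inner_sub_inner_smul_self_of_norm_eq_one he v
  rw [cross3_inv_norm_smul_of_inner_eq_zero he horth, hcross,
    inv_norm_smul_smul_of_pos (inv_pos.mpr (norm_pos_iff.mpr hu))]

theorem stmt_18_general (xi xj xk xl : E3) :
    let u1 := xi - xj
    let v1 := xi - xk
    let e11 := ‖u1‖⁻¹ • u1
    let e12 := ‖v1 - ⟪v1, e11⟫ • e11‖⁻¹ • (v1 - ⟪v1, e11⟫ • e11)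
    let e13 := cross3 e11 e12
    let u2 := xj - xi
    let v2 := xj - xl
    let e21 := ‖u2‖⁻¹ • u2
    let e22 := ‖v2 - ⟪v2, e21⟫ • e21‖⁻¹ • (v2 - ⟪v2, e21⟫ • e21)
    let e23 := cross3 e21 e22
    ⟪e13, e23⟫ =
      ⟪cross3 u1 v1, cross3 u2 v2⟫ / (‖cross3 u1 v1‖ * ‖cross3 u2 v2‖) := by
  intro u1 v1 e11 e12 e13 u2 v2 e21 e22 e23
  rw [show e13 = _ from cross3_gramSchmidt u1 v1, show e23 = _ from cross3_gramSchmidt u2 v2]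
  exact real_inner_inv_norm_smul_inv_norm_smul _ _

theorem stmt_18 (xi xj xk xl : E3)
    (hi : LinearIndependent ℝ ![xi - xj, xi - xk])
    (hj : LinearIndependent ℝ ![xj - xi, xj - xl]) :
    let u1 := xi - xj
    let v1 := xi - xk
    let e11 := ‖u1‖⁻¹ • u1
    let e12 := ‖v1 - ⟪v1, e11⟫ • e11‖⁻¹ • (v1 - ⟪v1, e11⟫ • e11)
    let e13 := cross3 e11 e12
    let u2 := xj - xi
    let v2 := xj - xl
    let e21 := ‖u2‖⁻¹ • u2
    let e22 := ‖v2 - ⟪v2, e21⟫ • e21‖⁻¹ • (v2 - ⟪v2, e21⟫ • e21)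
    let e23 := cross3 e21 e22
    ⟪e13, e23⟫ =
      ⟪cross3 u1 v1, cross3 u2 v2⟫ / (‖cross3 u1 v1‖ * ‖cross3 u2 v2‖) :=
  stmt_18_general xi xj xk xl
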